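/- Let A be an associative unital R-algebra and u, v, w ∈ A. In A[d₁,d₂,d₃]/(d₁²,d₂²,d₃²), consider the six ordered products u₁₂₃ = (1+d₃w)(1+d₂v)(1+d₁u), u₁₃₂ = (1+d₂v)(1+d₃w)(1+d₁u), etc. (with arguments permuted appropriately). Then u₁₂₃ and u₁₃₂ agree modulo the monomials d₂d₃ and d₁d₂d₃ (i.e., on D×(D⊕D)). Their first strong difference u₁₂₃ ∸₁ u₁₃₂ is the microsquare (d₁, d') ↦ 1 + d₁u + d'(wv − vw) + d₁d'(wvu − vwu), i.e. its coefficient of d₁ is u, its coefficient of d' is wv − vw = [v,w], and its coefficient of d₁d' is wvu − vwu. Moreover (u₁₂₃ ∸₁ u₁₃₂) ∸ (u₂₃₁ ∸₁ u₃₂₁) = [u,[v,w]], where [a,b] = ba − ab. -/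
import Mathlib


/-- An element of `A[d₁,d₂,d₃]/(d₁²,d₂²,d₃²)`, recorded by its coefficients on
the basis of square-free monomials `1, d₁, d₂, d₃, d₁d₂, d₁d₃, d₂d₃, d₁d₂d₃`. -/
structure Trunc3 (A : Type*) where
  c0 : A
  c1 : A
  c2 : A
  c3 : A
  c12 : A
  c13 : A
  c23 : A
  c123 : A

namespace Trunc3

variable {A : Type*} [Ring A]

/-- Multiplication in `A[d₁,d₂,d₃]/(d₁²,d₂²,d₃²)`. -/
def mul (x y : Trunc3 A) : Trunc3 A :=
  ⟨x.c0 * y.c0,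
   x.c0 * y.c1 + x.c1 * y.c0,
   x.c0 * y.c2 + x.c2 * y.c0,
   x.c0 * y.c3 + x.c3 * y.c0,
   x.c0 * y.c12 + x.c12 * y.c0 + x.c1 * y.c2 + x.c2 * y.c1,
   x.c0 * y.c13 + x.c13 * y.c0 + x.c1 * y.c3 + x.c3 * y.c1,
   x.c0 * y.c23 + x.c23 * y.c0 + x.c2 * y.c3 + x.c3 * y.c2,
   x.c0 * y.c123 + x.c123 * y.c0 + x.c1 * y.c23 + x.c23 * y.c1
     + x.c2 * y.c13 + x.c13 * y.c2 + x.c3 * y.c12 + x.c12 * y.c3⟩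

/-- The element `1 + d₁·u`. -/
def el1 (u : A) : Trunc3 A := ⟨1, u, 0, 0, 0, 0, 0, 0⟩

/-- The element `1 + d₂·u`. -/
def el2 (u : A) : Trunc3 A := ⟨1, 0, u, 0, 0, 0, 0, 0⟩

/-- The element `1 + d₃·u`. -/
def el3 (u : A) : Trunc3 A := ⟨1, 0, 0, u, 0, 0, 0, 0⟩

end Trunc3

open Trunc3 in
/-- The six ordered products of `(1+d₁u), (1+d₂v), (1+d₃w)` in
`A[d₁,d₂,d₃]/(d₁²,d₂²,d₃²)`: `u₁₂₃` and `u₁₃₂` agree except in the `d₂d₃` and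
`d₁d₂d₃` coefficients; the first strong difference `u₁₂₃ ∸₁ u₁₃₂` is the
microsquare with first-order coefficient `u`, coefficient `wv − vw = [v,w]`,
and coefficient `wvu − vwu`; and the strong difference of strong differences
`(u₁₂₃ ∸₁ u₁₃₂) ∸ (u₂₃₁ ∸₁ u₃₂₁)` equals `[u,[v,w]]` where `[a,b] = ba − ab`. -/
theorem strong_difference_gives_iterated_bracket (R : Type*) [CommRing R] (A : Type*)
    [Ring A] [Algebra R A] (u v w : A) :
    let u123 := mul (el3 w) (mul (el2 v) (el1 u))
    let u132 := mul (el2 v) (mul (el3 w) (el1 u))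
    let u231 := mul (el1 u) (mul (el3 w) (el2 v))
    let u321 := mul (el1 u) (mul (el2 v) (el3 w))
    -- u₁₂₃ and u₁₃₂ agree on D×(D⊕D)
    (u123.c0 = u132.c0 ∧ u123.c1 = u132.c1 ∧ u123.c2 = u132.c2 ∧ u123.c3 = u132.c3 ∧
      u123.c12 = u132.c12 ∧ u123.c13 = u132.c13) ∧
    -- coefficients of the first strong difference u₁₂₃ ∸₁ u₁₃₂
    (u123.c1 = u ∧ u123.c23 - u132.c23 = w * v - v * w ∧
      u123.c123 - u132.c123 = w * v * u - v * w * u) ∧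
    -- the strong difference of strong differences is [u,[v,w]]
    (u123.c123 - u132.c123) - (u231.c123 - u321.c123)
      = (w * v - v * w) * u - u * (w * v - v * w) := by
  simp only [mul, el1, el2, el3]
  norm_num
  constructor <;> noncomm_ring
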